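/- For 0 < q < p ≤ 1, real α, β with 0 ≤ α ≤ β, n ≥ 1, and x ∈ [0,1], the second moment of the (p,q)-Bernstein-Stancu operator satisfies S_{n,p,q}(t²; x) = (q[n]_{p,q}[n−1]_{p,q}/([n]_{p,q}+β)²) x² + ([n]_{p,q}(2α + p^{n−1})/([n]_{p,q}+β)²) x + α²/([n]_{p,q}+β)². -/

import Mathlib

/-!
The basis polynomials `pqBasis p q n k` satisfy a `(p,q)`-Pascal recursion, which gives
`∑ₖ pqBasis p q n k x = 1` by induction on `n`. The absorption identity
`[k+1] * [n+1 choose k+1] = [n+1] * [n choose k]` moves the first two moments of the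
unshifted nodes `p^(n-k) [k]` down to degree `n - 1`, where `[k+1] = p^k + q [k]` expresses
the second moment through the zeroth and first. Expanding `(p^(n-k) [k] + α)²` finishes.
-/

open Finset

noncomputable def pqInt (p q : ℝ) (m : ℕ) : ℝ :=
  ∑ i ∈ Finset.range m, p ^ (m - 1 - i) * q ^ i

noncomputable def pqFact (p q : ℝ) (n : ℕ) : ℝ :=
  ∏ j ∈ Finset.range n, pqInt p q (j + 1)

noncomputable def pqChoose (p q : ℝ) (n k : ℕ) : ℝ :=
  pqFact p q n / (pqFact p q k * pqFact p q (n - k))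

noncomputable def pqBasis (p q : ℝ) (n k : ℕ) (x : ℝ) : ℝ :=
  pqChoose p q n k * (p ^ (k * (k - 1) / 2) / p ^ (n * (n - 1) / 2)) * x ^ k *
    ∏ s ∈ Finset.range (n - k), (p ^ s - q ^ s * x)

noncomputable def pqNode (p q α β : ℝ) (n k : ℕ) : ℝ :=
  (p ^ (n - k) * pqInt p q k + α) / (pqInt p q n + β)

noncomputable def pqStancu (p q α β : ℝ) (n : ℕ) (f : ℝ → ℝ) (x : ℝ) : ℝ :=
  ∑ k ∈ Finset.range (n + 1), pqBasis p q n k x * f (pqNode p q α β n k)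

section

variable {p q : ℝ}

@[simp]
lemma pqInt_zero (p q : ℝ) : pqInt p q 0 = 0 := by simp [pqInt]

lemma pqInt_succ' (p q : ℝ) (m : ℕ) : pqInt p q (m + 1) = p * pqInt p q m + q ^ m := by
  rw [pqInt, pqInt, sum_range_succ, mul_sum]
  simp only [Nat.add_sub_cancel, Nat.sub_self, pow_zero, one_mul]
  congr 1
  refine sum_congr rfl fun i hi => ?_
  rw [show m - i = m - 1 - i + 1 by have := mem_range.mp hi; omega, pow_succ]
  ring

lemma pqInt_add (p q : ℝ) (a b : ℕ) :
    pqInt p q (a + b) = p ^ b * pqInt p q a + q ^ a * pqInt p q b := by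
  induction b with
  | zero => simp
  | succ b ih =>
    rw [← add_assoc, pqInt_succ', ih, pqInt_succ']
    ring

@[simp]
lemma pqInt_one (p q : ℝ) : pqInt p q 1 = 1 := by simp [pqInt]

lemma pqInt_succ (p q : ℝ) (m : ℕ) : pqInt p q (m + 1) = p ^ m + q * pqInt p q m := by
  simpa [add_comm] using pqInt_add p q 1 m

lemma pqInt_pos (hp : 0 < p) (hq : 0 < q) {m : ℕ} (hm : m ≠ 0) : 0 < pqInt p q m :=
  sum_pos (fun _ _ => by positivity) (nonempty_range_iff.mpr hm)

lemma pqFact_pos (hp : 0 < p) (hq : 0 < q) (n : ℕ) : 0 < pqFact p q n :=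
  prod_pos fun _ _ => pqInt_pos hp hq (Nat.succ_ne_zero _)

@[simp]
lemma pqFact_zero (p q : ℝ) : pqFact p q 0 = 1 := prod_range_zero _

lemma pqFact_succ (p q : ℝ) (n : ℕ) : pqFact p q (n + 1) = pqFact p q n * pqInt p q (n + 1) :=
  prod_range_succ _ _

lemma pqChoose_zero_right (hp : 0 < p) (hq : 0 < q) (n : ℕ) : pqChoose p q n 0 = 1 := by
  simp [pqChoose, (pqFact_pos hp hq n).ne']

lemma pqChoose_self (hp : 0 < p) (hq : 0 < q) (n : ℕ) : pqChoose p q n n = 1 := by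
  simp [pqChoose, (pqFact_pos hp hq n).ne']

lemma pqChoose_succ_succ_mul_pqInt (hp : 0 < p) (hq : 0 < q) (n k : ℕ) :
    pqChoose p q (n + 1) (k + 1) * pqInt p q (k + 1) = pqInt p q (n + 1) * pqChoose p q n k := by
  have := (pqFact_pos hp hq n).ne'
  have := (pqFact_pos hp hq k).ne'
  have := (pqFact_pos hp hq (n - k)).ne'
  have := (pqInt_pos hp hq k.succ_ne_zero).ne'
  rw [pqChoose, pqChoose, Nat.add_sub_add_right, pqFact_succ, pqFact_succ]
  field_simp

/-- Comes from splitting `[n+1] = p^(k+1) [n-k] + q^(n-k) [k+1]`. -/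
lemma pqChoose_succ_succ (hp : 0 < p) (hq : 0 < q) {n k : ℕ} (hk : k < n) :
    pqChoose p q (n + 1) (k + 1) =
      p ^ (k + 1) * pqChoose p q n (k + 1) + q ^ (n - k) * pqChoose p q n k := by
  obtain ⟨d, rfl⟩ : ∃ d, n = k + 1 + d := ⟨n - k - 1, by omega⟩
  have hsplit := pqInt_add p q (d + 1) (k + 1)
  rw [show d + 1 + (k + 1) = k + 1 + d + 1 by omega] at hsplit
  have := (pqFact_pos hp hq (k + 1 + d)).ne'
  have := (pqFact_pos hp hq k).ne'
  have := (pqFact_pos hp hq d).ne'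
  have := (pqInt_pos hp hq k.succ_ne_zero).ne'
  have := (pqInt_pos hp hq d.succ_ne_zero).ne'
  rw [pqChoose, pqChoose, pqChoose, show k + 1 + d + 1 - (k + 1) = d + 1 by omega,
    show k + 1 + d - (k + 1) = d by omega, show k + 1 + d - k = d + 1 by omega,
    pqFact_succ p q (k + 1 + d), pqFact_succ p q k, pqFact_succ p q d, hsplit]
  field_simp

lemma pqBasis_succ_zero (hp : 0 < p) (hq : 0 < q) (n : ℕ) (x : ℝ) :
    pqBasis p q (n + 1) 0 x = pqBasis p q n 0 x * (1 - (q / p) ^ n * x) := by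
  have := pow_ne_zero (n * (n - 1) / 2) hp.ne'
  have := pow_ne_zero n hp.ne'
  rw [pqBasis, pqBasis, pqChoose_zero_right hp hq, pqChoose_zero_right hp hq, Nat.triangle_succ,
    Nat.sub_zero, Nat.sub_zero, prod_range_succ, pow_add, div_pow]
  generalize ∏ s ∈ range n, (p ^ s - q ^ s * x) = P
  field_simp

lemma pqBasis_succ_self (hp : 0 < p) (hq : 0 < q) (n : ℕ) (x : ℝ) :
    pqBasis p q (n + 1) (n + 1) x = pqBasis p q n n x * x := by
  simp [pqBasis, pqChoose_self hp hq, div_self (pow_ne_zero _ hp.ne'), pow_succ]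

lemma pqBasis_succ_succ (hp : 0 < p) (hq : 0 < q) {n k : ℕ} (hk : k < n) (x : ℝ) :
    pqBasis p q (n + 1) (k + 1) x =
      pqBasis p q n (k + 1) x * (1 - (q / p) ^ (n - (k + 1)) * x) +
        pqBasis p q n k x * ((q / p) ^ (n - k) * x) := by
  obtain ⟨m, rfl⟩ : ∃ m, n = k + 1 + m := ⟨n - k - 1, by omega⟩
  have := pow_ne_zero ((k + 1 + m) * (k + 1 + m - 1) / 2) hp.ne'
  have := pow_ne_zero (k * (k - 1) / 2) hp.ne'
  rw [pqBasis, pqBasis, pqBasis, Nat.triangle_succ, Nat.triangle_succ, pqChoose_succ_succ hp hq hk,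
    show k + 1 + m + 1 - (k + 1) = m + 1 by omega, show k + 1 + m - (k + 1) = m by omega,
    show k + 1 + m - k = m + 1 by omega, prod_range_succ, div_pow, div_pow]
  generalize ∏ s ∈ range m, (p ^ s - q ^ s * x) = P
  field_simp
  ring

lemma pqBasis_succ_succ_mul_node (hp : 0 < p) (hq : 0 < q) {n k : ℕ} (hk : k ≤ n) (x : ℝ) :
    pqBasis p q (n + 1) (k + 1) x * (p ^ (n + 1 - (k + 1)) * pqInt p q (k + 1)) =
      pqInt p q (n + 1) * x * pqBasis p q n k x := by
  obtain ⟨m, rfl⟩ : ∃ m, n = k + m := ⟨n - k, by omega⟩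
  have := pow_ne_zero ((k + m) * (k + m - 1) / 2) hp.ne'
  have := pow_ne_zero (k * (k - 1) / 2) hp.ne'
  have hk := (pqInt_pos hp hq k.succ_ne_zero).ne'
  have hchoose : pqChoose p q (k + m + 1) (k + 1) =
      pqInt p q (k + m + 1) * pqChoose p q (k + m) k / pqInt p q (k + 1) :=
    eq_div_of_mul_eq hk (pqChoose_succ_succ_mul_pqInt hp hq (k + m) k)
  rw [pqBasis, pqBasis, Nat.triangle_succ, Nat.triangle_succ, Nat.add_sub_add_right,
    Nat.add_sub_cancel_left, hchoose]
  generalize ∏ s ∈ range m, (p ^ s - q ^ s * x) = P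
  field_simp
  ring

lemma sum_pqBasis (hp : 0 < p) (hq : 0 < q) (n : ℕ) (x : ℝ) :
    ∑ k ∈ range (n + 1), pqBasis p q n k x = 1 := by
  induction n with
  | zero => simp [pqBasis, pqChoose_self hp hq]
  | succ n ih =>
    have split : ∑ k ∈ range (n + 2), pqBasis p q (n + 1) k x =
        ∑ k ∈ range (n + 1), pqBasis p q n k x * (1 - (q / p) ^ (n - k) * x) +
          ∑ k ∈ range (n + 1), pqBasis p q n k x * ((q / p) ^ (n - k) * x) := by
      rw [sum_range_succ', sum_range_succ, sum_congr rfl fun k hk =>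
          pqBasis_succ_succ hp hq (mem_range.mp hk) x, sum_add_distrib,
        pqBasis_succ_self hp hq, pqBasis_succ_zero hp hq, sum_range_succ' _ n, sum_range_succ _ n]
      simp only [Nat.sub_self, Nat.sub_zero, pow_zero, one_mul]
      ring
    rw [split, ← sum_add_distrib]
    exact (sum_congr rfl fun k _ => by ring).trans ih

lemma sum_pqBasis_mul_node (hp : 0 < p) (hq : 0 < q) (n : ℕ) (x : ℝ) :
    ∑ k ∈ range (n + 1), pqBasis p q n k x * (p ^ (n - k) * pqInt p q k) = pqInt p q n * x := by
  cases n with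
  | zero => simp
  | succ n =>
    rw [sum_range_succ', pqInt_zero, mul_zero, mul_zero, add_zero,
      sum_congr rfl fun k hk => pqBasis_succ_succ_mul_node hp hq (mem_range_succ_iff.mp hk) x,
      ← mul_sum, sum_pqBasis hp hq, mul_one]

lemma sum_pqBasis_mul_node_sq (hp : 0 < p) (hq : 0 < q) (n : ℕ) (x : ℝ) :
    ∑ k ∈ range (n + 1), pqBasis p q n k x * (p ^ (n - k) * pqInt p q k) ^ 2 =
      pqInt p q n * x * (p ^ (n - 1) + q * pqInt p q (n - 1) * x) := by
  cases n with
  | zero => simp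
  | succ n =>
    have shift : ∀ k ∈ range (n + 1),
        pqBasis p q (n + 1) (k + 1) x * (p ^ (n + 1 - (k + 1)) * pqInt p q (k + 1)) ^ 2 =
          pqInt p q (n + 1) * x *
            (p ^ n * pqBasis p q n k x +
              q * (pqBasis p q n k x * (p ^ (n - k) * pqInt p q k))) := by
      intro k hk
      have hkn := mem_range_succ_iff.mp hk
      calc _ = pqBasis p q (n + 1) (k + 1) x * (p ^ (n + 1 - (k + 1)) * pqInt p q (k + 1)) *
              (p ^ (n - k) * pqInt p q (k + 1)) := by rw [Nat.add_sub_add_right]; ring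
        _ = pqInt p q (n + 1) * x * pqBasis p q n k x *
              (p ^ (n - k) * (p ^ k + q * pqInt p q k)) := by
          rw [pqBasis_succ_succ_mul_node hp hq hkn, pqInt_succ p q k]
        _ = _ := by
          rw [← pow_sub_mul_pow p hkn]
          ring
    rw [sum_range_succ', pqInt_zero, mul_zero, zero_pow two_ne_zero, mul_zero, add_zero,
      sum_congr rfl shift, ← mul_sum, sum_add_distrib, ← mul_sum, ← mul_sum,
      sum_pqBasis hp hq, sum_pqBasis_mul_node hp hq, Nat.add_sub_cancel]
    ring

end

theorem pqStancu_sq_general (p q α β x : ℝ) (hq : 0 < q) (hqp : q < p) (n : ℕ) :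
    pqStancu p q α β n (fun t => t ^ 2) x =
      (q * pqInt p q n * pqInt p q (n - 1) / (pqInt p q n + β) ^ 2) * x ^ 2 +
        (pqInt p q n * (2 * α + p ^ (n - 1)) / (pqInt p q n + β) ^ 2) * x +
        α ^ 2 / (pqInt p q n + β) ^ 2 := by
  have hp : 0 < p := hq.trans hqp
  calc pqStancu p q α β n (fun t => t ^ 2) x
      = (∑ k ∈ range (n + 1), pqBasis p q n k x * (p ^ (n - k) * pqInt p q k) ^ 2 +
          2 * α * ∑ k ∈ range (n + 1), pqBasis p q n k x * (p ^ (n - k) * pqInt p q k) +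
          α ^ 2 * ∑ k ∈ range (n + 1), pqBasis p q n k x) / (pqInt p q n + β) ^ 2 := by
        simp only [pqStancu, pqNode, div_pow, mul_sum, ← sum_add_distrib, sum_div]
        exact sum_congr rfl fun k _ => by ring
    _ = _ := by
        rw [sum_pqBasis_mul_node_sq hp hq, sum_pqBasis_mul_node hp hq, sum_pqBasis hp hq]
        ring

theorem pqStancu_sq (p q α β x : ℝ) (hq : 0 < q) (hqp : q < p) (hp : p ≤ 1)
    (hα : 0 ≤ α) (hαβ : α ≤ β) (n : ℕ) (hn : 1 ≤ n) (hx : x ∈ Set.Icc (0 : ℝ) 1) :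
    pqStancu p q α β n (fun t => t ^ 2) x =
      (q * pqInt p q n * pqInt p q (n - 1) / (pqInt p q n + β) ^ 2) * x ^ 2 +
        (pqInt p q n * (2 * α + p ^ (n - 1)) / (pqInt p q n + β) ^ 2) * x +
        α ^ 2 / (pqInt p q n + β) ^ 2 :=
  pqStancu_sq_general p q α β x hq hqp n
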